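/- arXiv:2506.22127 — 3 statements merged into one kernel-verified Lean document; each statement's English description precedes it below -/
import Mathlib

section
/- Let G be a directed graph, W a set of at least two terminal vertices, and C a closed directed walk of minimum total weight visiting all vertices of W, and among those of minimum number of arc occurrences. Then for every vertex v, the number of times C visits v is at most |W \ {v}|. -/
/-- A closed directed walk, given as the list of its arc occurrences. -/
def IsClosedWalk {V : Type*} (w : List (V × V)) : Prop :=
  w ≠ [] ∧ w.Chain' (fun a b => a.2 = b.1) ∧
    w.getLast?.map Prod.snd = w.head?.map Prod.fst

section Aux

variable {V : Type*} [DecidableEq V]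

private lemma getLast?_of_ne_nil {α : Type*} {l : List α} (h : l ≠ []) :
    ∃ x, l.getLast? = some x :=
  ⟨l.getLast h, List.getLast?_eq_getLast h⟩

private lemma head?_of_ne_nil {α : Type*} {l : List α} (h : l ≠ []) :
    ∃ x, l.head? = some x :=
  ⟨l.head h, List.head?_eq_head h⟩

private lemma getLast?_append_ne_nil {α : Type*} {l l' : List α} (h : l' ≠ []) :
    (l ++ l').getLast? = l'.getLast? := by
  obtain ⟨x, hx⟩ := getLast?_of_ne_nil h
  rw [List.getLast?_append, hx]; rfl

private lemma head?_append_ne_nil {α : Type*} {l l' : List α} (h : l ≠ []) :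
    (l ++ l').head? = l.head? := by
  obtain ⟨x, hx⟩ := head?_of_ne_nil h
  rw [List.head?_append, hx]; rfl

private lemma head_dropWhile_false {α : Type*} (p : α → Bool) :
    ∀ l : List α, ∀ e ∈ (l.dropWhile p).head?, p e = false := by
  intro l
  induction l with
  | nil => simp
  | cons a l ih =>
    by_cases h : p a = true
    · rw [List.dropWhile_cons_of_pos h]; exact ih
    · rw [List.dropWhile_cons_of_neg h]
      intro e he
      simp only [List.head?_cons, Option.mem_def, Option.some.injEq] at he
      subst he
      simpa using h

/-- Rotating a closed walk yields a closed walk. -/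
private lemma closedWalk_rotate (a b : List (V × V)) (h : IsClosedWalk (a ++ b)) :
    IsClosedWalk (b ++ a) := by
  obtain ⟨hne, hch, hcl⟩ := h
  by_cases ha : a = []
  · subst ha; simp only [List.nil_append] at hne hch hcl
    simpa using ⟨hne, hch, hcl⟩
  by_cases hb : b = []
  · subst hb; simp only [List.append_nil] at hne hch hcl
    simpa using ⟨hne, hch, hcl⟩
  obtain ⟨ha1, hb1, hjun⟩ := List.isChain_append.mp hch
  rw [getLast?_append_ne_nil hb, head?_append_ne_nil ha] at hcl
  refine ⟨by simp [hb], List.isChain_append.mpr ⟨hb1, ha1, ?_⟩, ?_⟩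
  · intro x hx y hy
    obtain ⟨x', hx'⟩ := getLast?_of_ne_nil hb
    obtain ⟨y', hy'⟩ := head?_of_ne_nil ha
    rw [hx'] at hx; rw [hy'] at hy
    rw [hx', hy'] at hcl
    simp only [Option.mem_def, Option.some.injEq] at hx hy
    subst hx; subst hy
    simpa using hcl
  · rw [getLast?_append_ne_nil ha, head?_append_ne_nil hb]
    obtain ⟨x', hx'⟩ := getLast?_of_ne_nil ha
    obtain ⟨y', hy'⟩ := head?_of_ne_nil hb
    rw [hx', hy']
    have := hjun x' (by rw [hx']; rfl) y' (by rw [hy']; rfl)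
    simpa using this

/-- Decomposition of a closed walk starting and ending at `v` into segments,
each a walk from `v` to `v` containing `v` as a head exactly once. -/
private lemma decomp (v : V) : ∀ n (D : List (V × V)), D.length ≤ n →
    D.Chain' (fun a b => a.2 = b.1) →
    D.head?.map Prod.fst = some v → D.getLast?.map Prod.snd = some v →
    ∃ L : List (List (V × V)), L.flatten = D ∧
      L.length = (D.map Prod.fst).count v ∧
      ∀ s ∈ L, s ≠ [] ∧ s.Chain' (fun a b => a.2 = b.1) ∧
        s.head?.map Prod.fst = some v ∧ s.getLast?.map Prod.snd = some v := by
  intro n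
  induction n with
  | zero =>
    intro D hlen _ hh _
    obtain rfl := List.length_eq_zero_iff.mp (Nat.le_zero.mp hlen)
    simp at hh
  | succ n ih =>
    intro D hlen hchain hhead hlast
    obtain ⟨p, D₁, rfl⟩ : ∃ p D₁, D = p :: D₁ := by
      cases D with
      | nil => simp at hhead
      | cons p D₁ => exact ⟨p, D₁, rfl⟩
    have hp : p.1 = v := by simpa using hhead
    set q : V × V → Bool := fun e => decide (¬ (e.1 = v)) with hq
    set s₁ := D₁.takeWhile q with hs₁
    set t := D₁.dropWhile q with ht
    have hst : (p :: s₁) ++ t = p :: D₁ := by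
      simp only [List.cons_append, List.cons.injEq, true_and]
      exact List.takeWhile_append_dropWhile (p := q) (l := D₁)
    have hs₁mem : ∀ e ∈ s₁, e.1 ≠ v := by
      intro e he hev
      have := List.mem_takeWhile_imp (hs₁ ▸ he)
      simp [hq, hev] at this
    have hthead : ∀ e ∈ t.head?, e.1 = v := by
      intro e he
      have := head_dropWhile_false q D₁ e (by rw [← ht]; exact he)
      simpa [hq] using this
    have htsuff : t <:+ D₁ := ht ▸ List.dropWhile_suffix q
    clear_value s₁ t
    clear hs₁ ht
    have hcount_s : ((p :: s₁).map Prod.fst).count v = 1 := by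
      have h0 : (s₁.map Prod.fst).count v = 0 := by
        rw [List.count_eq_zero]
        intro hv
        obtain ⟨e, he, he2⟩ := List.mem_map.mp hv
        exact hs₁mem e he he2
      simp [List.count_cons, hp, h0]
    by_cases htn : t = []
    · subst htn
      rw [List.append_nil] at hst
      obtain rfl : s₁ = D₁ := by simpa using hst
      refine ⟨[p :: s₁], by simp, by simpa using hcount_s.symm, ?_⟩
      intro s hs
      simp only [List.mem_singleton] at hs; subst hs
      exact ⟨by simp, hchain, by simp [hp], hlast⟩
    · obtain ⟨e, t', rfl⟩ : ∃ e t', t = e :: t' := by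
        cases t with
        | nil => exact absurd rfl htn
        | cons e t' => exact ⟨e, t', rfl⟩
      have he : e.1 = v := hthead e rfl
      have htsuff' : (e :: t') <:+ p :: D₁ := htsuff.trans (List.suffix_cons p D₁)
      have hchain_t : (e :: t').Chain' (fun a b => a.2 = b.1) :=
        hchain.suffix htsuff'
      have hlast_t : (e :: t').getLast?.map Prod.snd = some v := by
        rw [← hst] at hlast
        rwa [getLast?_append_ne_nil (by simp)] at hlast
      have hlen_t : (e :: t').length ≤ n := by
        have h2 : (e :: t').length ≤ D₁.length := htsuff.length_le
        simp only [List.length_cons] at hlen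
        omega
      obtain ⟨L', hL'j, hL'len, hL'props⟩ :=
        ih (e :: t') hlen_t hchain_t (by simp [he]) hlast_t
      have hchain_st := hchain
      rw [← hst] at hchain_st
      obtain ⟨hchs, -, hjun⟩ := List.isChain_append.mp hchain_st
      refine ⟨(p :: s₁) :: L', ?_, ?_, ?_⟩
      · simp only [List.flatten_cons, hL'j, hst]
      · have hcnt : ((p :: D₁).map Prod.fst).count v
            = ((p :: s₁).map Prod.fst).count v + ((e :: t').map Prod.fst).count v := by
          rw [← hst, List.map_append, List.count_append]
        simp only [List.length_cons, hL'len, hcnt, hcount_s]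
        omega
      · intro s hs
        rcases List.mem_cons.mp hs with rfl | hs'
        · refine ⟨by simp, hchs, by simp [hp], ?_⟩
          obtain ⟨x', hx'⟩ := getLast?_of_ne_nil (l := p :: s₁) (by simp)
          rw [hx']
          have := hjun x' (by rw [hx']; rfl) e (by rfl)
          simp only [this, he, Option.map_some]
        · exact hL'props s hs'

/-- Joining a nonempty list of v→v walks gives a v→v walk. -/
private lemma joinWalk (v : V) : ∀ L : List (List (V × V)), L ≠ [] →
    (∀ s ∈ L, s ≠ [] ∧ s.Chain' (fun a b => a.2 = b.1) ∧
      s.head?.map Prod.fst = some v ∧ s.getLast?.map Prod.snd = some v) →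
    L.flatten ≠ [] ∧ L.flatten.Chain' (fun a b => a.2 = b.1) ∧
      L.flatten.head?.map Prod.fst = some v ∧
      L.flatten.getLast?.map Prod.snd = some v := by
  intro L
  induction L with
  | nil => intro h; exact absurd rfl h
  | cons s L ih =>
    intro _ hprops
    obtain ⟨hs0, hs1, hs2, hs3⟩ := hprops s (by simp)
    by_cases hL : L = []
    · subst hL
      simp only [List.flatten_cons, List.flatten_nil, List.append_nil]
      exact ⟨hs0, hs1, hs2, hs3⟩
    · obtain ⟨h0, h1, h2, h3⟩ := ih hL (fun s hs => hprops s (by simp [hs]))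
      simp only [List.flatten_cons]
      refine ⟨by simp [hs0], List.isChain_append.mpr ⟨hs1, h1, ?_⟩, ?_, ?_⟩
      · intro x hx y hy
        obtain ⟨x', hx'⟩ := getLast?_of_ne_nil hs0
        obtain ⟨y', hy'⟩ := head?_of_ne_nil h0
        rw [hx'] at hx hs3; rw [hy'] at hy h2
        simp only [Option.mem_def, Option.some.injEq] at hx hy
        subst hx; subst hy
        simp only [Option.map_some, Option.some.injEq] at hs3 h2
        rw [hs3, h2]
      · rw [head?_append_ne_nil hs0]; exact hs2
      · rw [getLast?_append_ne_nil h0]; exact h3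

end Aux

/-- In an optimal solution (a closed directed walk of minimum total weight
visiting all terminals of `W`, and among those of minimum number of arc
occurrences), every vertex `v` is visited at most `|W \ {v}|` times.
Visits to `v` are counted as occurrences of `v` as a tail of an arc of the
closed walk (so the coinciding start/end is counted once). -/
theorem optimal_solution_visits_bound {V : Type*} [DecidableEq V]
    (A : Set (V × V)) (wt : V × V → ℕ) (hwt : ∀ e ∈ A, 1 ≤ wt e)
    (W : Finset V) (hW : 2 ≤ W.card)
    (C : List (V × V))
    (hCwalk : IsClosedWalk C) (hCA : ∀ e ∈ C, e ∈ A)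
    (hCvisits : ∀ v ∈ W, v ∈ C.map Prod.fst)
    (hminWeight : ∀ C' : List (V × V), IsClosedWalk C' → (∀ e ∈ C', e ∈ A) →
      (∀ v ∈ W, v ∈ C'.map Prod.fst) → (C.map wt).sum ≤ (C'.map wt).sum)
    (hminLen : ∀ C' : List (V × V), IsClosedWalk C' → (∀ e ∈ C', e ∈ A) →
      (∀ v ∈ W, v ∈ C'.map Prod.fst) → (C'.map wt).sum = (C.map wt).sum →
      C.length ≤ C'.length) :
    ∀ v : V, (C.map Prod.fst).count v ≤ (W.erase v).card := by
  intro v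
  by_contra hlt
  push_neg at hlt
  set m := (W.erase v).card with hm
  set k := (C.map Prod.fst).count v with hk
  have hm1 : 1 ≤ m := by
    have := Finset.pred_card_le_card_erase (s := W) (a := v)
    omega
  have hk2 : 2 ≤ k := by omega
  -- v occurs as a head
  have hvC : v ∈ C.map Prod.fst := List.count_pos_iff.mp (by omega)
  obtain ⟨p, hpC, hp⟩ := List.mem_map.mp hvC
  obtain ⟨a, b, hab⟩ := List.append_of_mem hpC
  set D : List (V × V) := (p :: b) ++ a with hD
  have hperm : C.Perm D := by rw [hab, hD]; exact List.perm_append_comm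
  have hDwalk : IsClosedWalk D := closedWalk_rotate a (p :: b) (hab ▸ hCwalk)
  have hDhead : D.head?.map Prod.fst = some v := by
    rw [hD, head?_append_ne_nil (by simp)]
    simp [hp]
  have hDlast : D.getLast?.map Prod.snd = some v := by
    rw [hDwalk.2.2, hDhead]
  have hDcount : (D.map Prod.fst).count v = k := by
    rw [hk]; exact ((hperm.map Prod.fst).count_eq v).symm
  obtain ⟨L, hLj, hLlen, hLprops⟩ :=
    decomp v D.length D le_rfl hDwalk.2.1 hDhead hDlast
  rw [hDcount] at hLlen
  have hLpos : 0 < L.length := by omega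
  -- choice of a segment index for each terminal
  have hg : ∀ w ∈ W.erase v, ∃ i : Fin L.length, w ∈ (L.get i).map Prod.fst := by
    intro w hw
    have hwW : w ∈ W := Finset.mem_of_mem_erase hw
    have : w ∈ D.map Prod.fst := (hperm.map Prod.fst).mem_iff.mp (hCvisits w hwW)
    obtain ⟨e, heD, he⟩ := List.mem_map.mp this
    rw [← hLj] at heD
    obtain ⟨s, hsL, hes⟩ := List.mem_flatten.mp heD
    obtain ⟨i, hi⟩ := List.mem_iff_get.mp hsL
    exact ⟨i, hi ▸ (List.mem_map.mpr ⟨e, hes, he⟩)⟩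
  classical
  set g : V → Fin L.length := fun w =>
    if h : w ∈ W.erase v then (hg w h).choose else ⟨0, hLpos⟩ with hgdef
  have hgspec : ∀ w ∈ W.erase v, w ∈ (L.get (g w)).map Prod.fst := by
    intro w hw
    rw [hgdef]; simp only [hw, dif_pos]
    exact (hg w hw).choose_spec
  -- pigeonhole: some index is not chosen
  obtain ⟨i, hi⟩ : ∃ i : Fin L.length, i ∉ (W.erase v).image g := by
    by_contra hc
    push_neg at hc
    have h1 : (Finset.univ : Finset (Fin L.length)) ⊆ (W.erase v).image g :=
      fun i _ => hc i
    have h2 := Finset.card_le_card h1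
    have h3 := Finset.card_image_le (s := W.erase v) (f := g)
    simp only [Finset.card_univ, Fintype.card_fin] at h2
    omega
  set s₀ := L.get i with hs₀
  set L1 := L.take i.val with hL1
  set L2 := L.drop (i.val + 1) with hL2
  have hsplit : L = L1 ++ s₀ :: L2 := by
    rw [hL1, hL2, hs₀]
    conv_lhs => rw [← List.take_append_drop i.val L]
    rw [List.drop_eq_getElem_cons i.isLt]
    rfl
  -- surviving segments
  have hmem' : ∀ j : Fin L.length, j ≠ i → L.get j ∈ L1 ++ L2 := by
    intro j hj
    rcases lt_or_gt_of_ne (fun h => hj (Fin.ext h)) with hlt' | hgt'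
    · apply List.mem_append_left
      have hjt : j.val < L1.length := by
        rw [hL1, List.length_take]; omega
      have : L1[j.val] = L[j.val] := List.getElem_take
      rw [List.get_eq_getElem, ← this]
      exact List.getElem_mem hjt
    · apply List.mem_append_right
      have hjt : j.val - (i.val + 1) < L2.length := by
        rw [hL2, List.length_drop]; omega
      have : L2[j.val - (i.val + 1)] = L[j.val] := by
        have h' := List.getElem_drop (xs := L) (i := i.val + 1) (j := j.val - (i.val + 1)) (h := hjt)
        have hidx : i.val + 1 + (j.val - (i.val + 1)) = j.val := by omega
        simp only [hidx] at h'
        exact h'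
      rw [List.get_eq_getElem, ← this]
      exact List.getElem_mem hjt
  have hL'ne : L1 ++ L2 ≠ [] := by
    intro hnil
    have := congrArg List.length hnil
    simp only [List.length_append, hL1, hL2, List.length_take, List.length_drop,
      List.length_nil] at this
    omega
  have hsubL : ∀ s ∈ L1 ++ L2, s ∈ L := by
    intro s hs
    rcases List.mem_append.mp hs with h | h
    · exact List.mem_of_mem_take h
    · exact List.mem_of_mem_drop h
  have hprops' := fun s hs => hLprops s (hsubL s hs)
  obtain ⟨h0, h1, h2, h3⟩ := joinWalk v (L1 ++ L2) hL'ne hprops'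
  set C' := (L1 ++ L2).flatten with hC'
  have hC'walk : IsClosedWalk C' := ⟨h0, h1, by rw [h3, h2]⟩
  -- arcs of C' are arcs of C
  have hDsplit : D = L1.flatten ++ (s₀ ++ L2.flatten) := by
    rw [← hLj, hsplit]; simp
  have hC'sub : ∀ e ∈ C', e ∈ C := by
    intro e he
    rw [hC', List.flatten_append] at he
    apply hperm.mem_iff.mpr
    rw [hDsplit]
    rcases List.mem_append.mp he with h | h
    · exact List.mem_append_left _ h
    · exact List.mem_append_right _ (List.mem_append_right _ h)
  have hC'A : ∀ e ∈ C', e ∈ A := fun e he => hCA e (hC'sub e he)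
  -- C' visits all terminals
  have hC'visits : ∀ w ∈ W, w ∈ C'.map Prod.fst := by
    intro w hw
    by_cases hwv : w = v
    · subst hwv
      obtain ⟨e, he⟩ := head?_of_ne_nil h0
      rw [he] at h2
      simp only [Option.map_some, Option.some.injEq] at h2
      exact List.mem_map.mpr ⟨e, List.mem_of_mem_head? (by rw [he]; rfl), h2⟩
    · have hwe : w ∈ W.erase v := Finset.mem_erase.mpr ⟨hwv, hw⟩
      have hji : g w ≠ i := by
        intro h
        exact hi (h ▸ Finset.mem_image_of_mem g hwe)
      have hsm := hmem' (g w) hji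
      obtain ⟨e, hes, he⟩ := List.mem_map.mp (hgspec w hwe)
      exact List.mem_map.mpr ⟨e, List.mem_flatten.mpr ⟨L.get (g w), hsm, hes⟩, he⟩
  -- weight strictly decreases: contradiction
  have hsum : (C'.map wt).sum + (s₀.map wt).sum = (C.map wt).sum := by
    have hCsum : (C.map wt).sum = (D.map wt).sum := (hperm.map wt).sum_eq
    rw [hCsum, hDsplit, hC', List.flatten_append]
    simp only [List.map_append, List.sum_append]
    ring
  have hs₀pos : 1 ≤ (s₀.map wt).sum := by
    have hs₀mem : s₀ ∈ L := by rw [hsplit]; simp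
    obtain ⟨hs0ne, -, -, -⟩ := hLprops s₀ hs₀mem
    obtain ⟨e, r, her⟩ := List.exists_cons_of_ne_nil hs0ne
    have heC : e ∈ C := by
      apply hperm.mem_iff.mpr
      rw [hDsplit]
      refine List.mem_append_right _ (List.mem_append_left _ ?_)
      rw [her]; simp
    have hwte := hwt e (hCA e heC)
    rw [her]
    simp only [List.map_cons, List.sum_cons]
    omega
  have := hminWeight C' hC'walk hC'A hC'visits
  omega
end

section
/- Color coding correctness: let G be a directed multigraph whose arcs are colored with colors [k], let W be a set of waypoints with |W| \le k, and fix w_0 \in W. Define T[W', C, v] as the minimum weight of a walk starting at w_0, visiting each waypoint in W' \subseteq W \ {w_0}, using exactly one arc of each color in C \subseteq [k] and no arc of any other color, and ending at v. Then for |C| \ge 1, T[W', C, v] = min over arcs (u,v) with f(u,v) \in C of T[W' \ {v}, C \ {f(u,v)}, u] + w(u,v). -/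
open scoped ENNReal

/-- `minWeight k src dst wt f w0 W' C v` is the minimum weight (in `ℕ∞`) of a
walk in the arc-colored directed multigraph (arcs `E` with endpoints
`src`, `dst`, weights `wt` and colors `f`) that starts at `w0`, visits every
waypoint of `W'`, uses exactly one arc of each color of `C` and no arc of any
other color, and ends at `v`.  It is `⊤` if no such walk exists. -/
noncomputable def minWeight {V E : Type*} [DecidableEq V] (k : ℕ)
    (src dst : E → V) (wt : E → ℕ) (f : E → Fin k)
    (w0 : V) (W' : Finset V) (C : Finset (Fin k)) (v : V) : ℕ∞ :=
  sInf {n : ℕ∞ | ∃ p : List E,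
    p.Chain' (fun a b => dst a = src b) ∧
    (∀ e, p.head? = some e → src e = w0) ∧
    (w0 :: p.map dst).getLast (by simp) = v ∧
    (∀ x ∈ W', x = w0 ∨ x ∈ p.map dst) ∧
    (p.map f).Nodup ∧ (p.map f).toFinset = C ∧
    n = ((p.map wt).sum : ℕ∞)}

lemma enat_sInf_mem {s : Set ℕ∞} (hs : s.Nonempty) : sInf s ∈ s := by
  obtain ⟨a, ha, hmin⟩ :=
    (IsWellFounded.wf : WellFounded ((· < ·) : ℕ∞ → ℕ∞ → Prop)).has_min s hs
  have h : sInf s = a := le_antisymm (sInf_le ha) (le_sInf fun b hb => not_lt.mp (hmin b hb))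
  rw [h]; exact ha

lemma cons_map_getLast {V E : Type*} (dst : E → V) (w0 : V) (q : List E) (hq : q ≠ []) :
    (w0 :: q.map dst).getLast (by simp) = dst (q.getLast hq) := by
  rw [List.getLast_cons (by simpa using hq), List.getLast_map]

/-- Color coding DP recurrence: for `|C| ≥ 1`,
`T[W', C, v] = min over arcs (u,v) with f(u,v) ∈ C of
T[W' \ {v}, C \ {f(u,v)}, u] + wt(u,v)`. -/
theorem minWeight_recurrence {V E : Type*} [DecidableEq V] (k : ℕ)
    (src dst : E → V) (wt : E → ℕ) (hwt : ∀ e, 1 ≤ wt e) (f : E → Fin k)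
    (W : Finset V) (hWk : W.card ≤ k) (w0 : V) (hw0 : w0 ∈ W)
    (W' : Finset V) (hW' : W' ⊆ W.erase w0)
    (C : Finset (Fin k)) (hC : C.Nonempty) (v : V) :
    minWeight k src dst wt f w0 W' C v =
      sInf {x : ℕ∞ | ∃ e : E, dst e = v ∧ f e ∈ C ∧
        x = minWeight k src dst wt f w0 (W'.erase v) (C.erase (f e)) (src e)
              + (wt e : ℕ∞)} := by
  classical
  apply le_antisymm
  · refine le_sInf ?_
    rintro x ⟨e, hdv, hfC, rfl⟩
    rcases eq_or_ne (minWeight k src dst wt f w0 (W'.erase v) (C.erase (f e)) (src e)) ⊤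
      with hT | hT
    · simp [hT]
    have hne : Set.Nonempty {n : ℕ∞ | ∃ q : List E,
        q.Chain' (fun a b => dst a = src b) ∧
        (∀ a, q.head? = some a → src a = w0) ∧
        (w0 :: q.map dst).getLast (by simp) = src e ∧
        (∀ x ∈ W'.erase v, x = w0 ∨ x ∈ q.map dst) ∧
        (q.map f).Nodup ∧ (q.map f).toFinset = C.erase (f e) ∧
        n = ((q.map wt).sum : ℕ∞)} := by
      rcases Set.eq_empty_or_nonempty
        {n : ℕ∞ | ∃ q : List E,
          q.Chain' (fun a b => dst a = src b) ∧
          (∀ a, q.head? = some a → src a = w0) ∧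
          (w0 :: q.map dst).getLast (by simp) = src e ∧
          (∀ x ∈ W'.erase v, x = w0 ∨ x ∈ q.map dst) ∧
          (q.map f).Nodup ∧ (q.map f).toFinset = C.erase (f e) ∧
          n = ((q.map wt).sum : ℕ∞)} with h | h
      · exact absurd (by rw [minWeight, h, sInf_empty]) hT
      · exact h
    obtain ⟨q, hchain, hhead, hend, hway, hnd, hcol, hsum⟩ := enat_sInf_mem hne
    have hval : minWeight k src dst wt f w0 (W'.erase v) (C.erase (f e)) (src e)
        = ((q.map wt).sum : ℕ∞) := by rw [minWeight]; exact hsum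
    rw [hval, minWeight]
    apply sInf_le
    refine ⟨q ++ [e], ?_, ?_, ?_, ?_, ?_, ?_, ?_⟩
    · refine List.isChain_append.mpr ⟨hchain, by simp, ?_⟩
      intro a ha b hb
      rcases List.eq_nil_or_concat q with rfl | ⟨q', e', rfl⟩
      · simp at ha
      · have hq : q'.concat e' ≠ [] := by simp
        rw [List.concat_eq_append] at *
        rw [List.getLast?_eq_getLast hq] at ha
        simp only [Option.mem_def, Option.some.injEq] at ha hb
        subst ha
        simp only [List.head?_cons, Option.some.injEq] at hb
        subst hb
        rw [← cons_map_getLast dst w0 _ hq]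
        exact hend
    · intro a ha
      cases q with
      | nil =>
        simp only [List.nil_append, List.head?_cons, Option.some.injEq] at ha
        subst ha
        simpa using hend.symm
      | cons b l =>
        simp only [List.cons_append, List.head?_cons, Option.some.injEq] at ha
        subst ha
        exact hhead _ rfl
    · simp [List.getLast_concat, hdv]
    · intro x hx
      rcases eq_or_ne x v with rfl | hxv
      · right; simp [hdv]
      · rcases hway x (Finset.mem_erase.mpr ⟨hxv, hx⟩) with h | h
        · exact Or.inl h
        · right; rw [List.map_append]; exact List.mem_append_left _ h
    · rw [List.map_append, List.nodup_append]
      refine ⟨hnd, by simp, ?_⟩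
      intro a ha b hb hab; subst hab
      simp only [List.map_cons, List.map_nil, List.mem_singleton] at hb
      subst hb
      have : f e ∈ (q.map f).toFinset := List.mem_toFinset.mpr ha
      rw [hcol] at this
      exact Finset.notMem_erase _ _ this
    · rw [List.map_append, List.toFinset_append, hcol]
      simp only [List.map_cons, List.map_nil, List.toFinset_cons, List.toFinset_nil]
      rw [Finset.union_comm]
      simpa using Finset.insert_erase hfC
    · rw [List.map_append, List.sum_append]
      push_cast
      simp
  · rw [minWeight]
    refine le_sInf ?_
    rintro n ⟨p, hchain, hhead, hend, hway, hnd, hcol, rfl⟩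
    rcases List.eq_nil_or_concat p with rfl | ⟨q, e, rfl⟩
    · exfalso
      obtain ⟨c, hc⟩ := hC
      rw [← hcol] at hc
      simp at hc
    rw [List.concat_eq_append] at *
    have hdv : dst e = v := by
      rw [← hend]; simp [List.getLast_concat]
    have hfeq : ((q ++ [e]).map f).toFinset = (q.map f).toFinset ∪ {f e} := by
      rw [List.map_append, List.toFinset_append]; simp
    have hfC : f e ∈ C := by
      rw [← hcol, hfeq]; simp
    have hndq : (q.map f).Nodup ∧ f e ∉ q.map f := by
      rw [List.map_append, List.nodup_append] at hnd
      exact ⟨hnd.1, fun h => hnd.2.2 _ h _ (by simp) rfl⟩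
    have hcolq : (q.map f).toFinset = C.erase (f e) := by
      have hni : f e ∉ (q.map f).toFinset := fun h => hndq.2 (List.mem_toFinset.mp h)
      rw [← hcol, hfeq, Finset.union_comm,
        show ({f e} : Finset (Fin k)) ∪ (q.map f).toFinset
            = insert (f e) ((q.map f).toFinset) from (Finset.insert_eq _ _).symm,
        Finset.erase_insert hni]
    have hendq : (w0 :: q.map dst).getLast (by simp) = src e := by
      rcases List.eq_nil_or_concat q with rfl | ⟨q', e', hq'⟩
      · simp only [List.nil_append] at hhead
        simpa using (hhead e (by simp)).symm
      · have hq : q ≠ [] := by rw [hq']; simp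
        rw [cons_map_getLast dst w0 q hq]
        have := (List.isChain_append.mp hchain).2.2
        exact this _ (List.getLast?_eq_getLast hq ▸ rfl) e rfl
    have hmem : minWeight k src dst wt f w0 (W'.erase v) (C.erase (f e)) (src e)
        ≤ ((q.map wt).sum : ℕ∞) := by
      rw [minWeight]
      apply sInf_le
      refine ⟨q, (List.isChain_append.mp hchain).1, ?_, hendq, ?_, hndq.1, hcolq, rfl⟩
      · intro a ha
        apply hhead
        rw [List.head?_append, ha]; rfl
      · intro x hx
        obtain ⟨hxv, hxW⟩ := Finset.mem_erase.mp hx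
        rcases hway x hxW with h | h
        · exact Or.inl h
        · rw [List.map_append] at h
          rcases List.mem_append.mp h with h | h
          · exact Or.inr h
          · simp only [List.map_cons, List.map_nil, List.mem_singleton] at h
            exact absurd (h.trans hdv) hxv
    refine le_trans (sInf_le ⟨e, hdv, hfC, rfl⟩) ?_
    calc minWeight k src dst wt f w0 (W'.erase v) (C.erase (f e)) (src e) + (wt e : ℕ∞)
        ≤ ((q.map wt).sum : ℕ∞) + (wt e : ℕ∞) := add_le_add_left hmem _
      _ = (((q ++ [e]).map wt).sum : ℕ∞) := by
          rw [List.map_append, List.sum_append]; push_cast; simp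
end

section
/- Force-p-traversals gadget: let G' be a directed graph containing vertices u_in, w, u_out and terminal vertices v_1,...,v_p, with arcs (u_in, v_i) and (v_i, w) for each i, and an arc (w, u_out) of capacity p, where no other arcs of G' are incident to v_1,...,v_p or w, arcs into the gadget enter only at u_in and arcs out leave only from u_out. Then every closed walk in G' that visits every terminal v_i at least once and respects capacities traverses from u_in to u_out through the gadget exactly p times. -/
lemma count_eq_card_filter_get {V : Type*} [DecidableEq V] (C : List (V × V)) (a : V × V) :
    C.count a = (Finset.univ.filter (fun k : Fin C.length => C.get k = a)).card := by
  conv_lhs => rw [← List.map_get_finRange C]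
  rw [List.count, List.countP_map, Fin.univ_def]
  simp [Finset.filter, Finset.card, List.countP_eq_length_filter, Multiset.filter_coe,
    Function.comp]
  congr 1
  apply List.filter_congr
  intro x _
  simp only [Function.comp_apply, List.get_eq_getElem, Bool.beq_eq_decide_eq]

/-- Force-`p`-traversals gadget: in a directed graph containing the gadget
with entry `uIn`, internal vertex `w`, exit `uOut`, terminals `v 1, …, v p`,
arcs `(uIn, v i)`, `(v i, w)` and an arc `(w, uOut)` of capacity `p`, where
no other arcs are incident to the `v i`'s or to `w`, every closed walk that
visits every terminal at least once and respects capacities traverses the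
gadget from `uIn` to `uOut` exactly `p` times (equivalently, uses the arc
`(w, uOut)` exactly `p` times). -/
theorem force_p_traversals_gadget {V : Type*} [DecidableEq V]
    (A : Set (V × V)) (cap : V × V → ℕ) (p : ℕ)
    (uIn w uOut : V) (v : Fin p → V)
    (hinj : Function.Injective v)
    (hvdist : ∀ i, v i ≠ uIn ∧ v i ≠ w ∧ v i ≠ uOut)
    (hwdist : w ≠ uIn ∧ w ≠ uOut)
    (harcs : ∀ i, (uIn, v i) ∈ A ∧ (v i, w) ∈ A)
    (hwu : (w, uOut) ∈ A)
    (hcapwu : cap (w, uOut) = p)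
    (hvin : ∀ a ∈ A, ∀ i, a.2 = v i → a.1 = uIn)
    (hvout : ∀ a ∈ A, ∀ i, a.1 = v i → a.2 = w)
    (hwin : ∀ a ∈ A, a.2 = w → ∃ i, a.1 = v i)
    (hwout : ∀ a ∈ A, a.1 = w → a.2 = uOut)
    (C : List (V × V)) (hC : IsClosedWalk C) (hCA : ∀ e ∈ C, e ∈ A)
    (hvisit : ∀ i, v i ∈ C.map Prod.fst)
    (hcaps : ∀ a : V × V, C.count a ≤ cap a) :
    C.count (w, uOut) = p := by
  obtain ⟨hne, hchain, hclosed⟩ := hC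
  set n := C.length with hn
  have npos : 0 < n := List.length_pos_iff.2 hne
  -- successor lemma
  have succ_lem : ∀ k : Fin n, (C.get k).2 = w →
      C.get ⟨(k.1 + 1) % n, Nat.mod_lt _ npos⟩ = (w, uOut) := by
    intro k hk
    by_cases h : k.1 + 1 < n
    · have hmod : (k.1 + 1) % n = k.1 + 1 := Nat.mod_eq_of_lt h
      have hch : (C.get k).2 = (C.get ⟨k.1 + 1, h⟩).1 := by
        have := List.isChain_iff_getElem.1 hchain k.1 (by omega)
        simpa using this
      have h1 : (C.get ⟨k.1 + 1, h⟩).1 = w := by rw [← hch, hk]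
      have h2 : (C.get ⟨k.1 + 1, h⟩).2 = uOut :=
        hwout _ (hCA _ (C.get_mem _)) h1
      have : C.get ⟨(k.1 + 1) % n, Nat.mod_lt _ npos⟩ = C.get ⟨k.1 + 1, h⟩ := by
        congr 1; exact Fin.ext hmod
      rw [this, ← h1, ← h2]
    · -- k is last index; wrap around to index 0
      have hk1 : k.1 = n - 1 := by omega
      have hmod : (k.1 + 1) % n = 0 := by
        rw [hk1]; simp [Nat.sub_add_cancel npos]
      have hlast : C.getLast hne = C.get k := by
        rw [List.getLast_eq_getElem, List.get_eq_getElem]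
        congr 1
        exact hk1.symm
      have hhead : C.head hne = C.get ⟨0, npos⟩ := by
        rw [← List.get_mk_zero npos]
      have hclose : (C.getLast hne).2 = (C.head hne).1 := by
        have h1 : C.getLast? = some (C.getLast hne) := List.getLast?_eq_getLast hne
        have h2 : C.head? = some (C.head hne) := List.head?_eq_head hne
        rw [h1, h2] at hclosed
        simpa using hclosed
      have h1 : (C.get ⟨0, npos⟩).1 = w := by
        rw [← hhead, ← hclose, hlast, hk]
      have h2 : (C.get ⟨0, npos⟩).2 = uOut :=
        hwout _ (hCA _ (C.get_mem _)) h1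
      have : C.get ⟨(k.1 + 1) % n, Nat.mod_lt _ npos⟩ = C.get ⟨0, npos⟩ := by
        congr 1; exact Fin.ext hmod
      rw [this, ← h1, ← h2]
  -- each (v i, w) is in C
  have hmemvi : ∀ i, (v i, w) ∈ C := by
    intro i
    obtain ⟨e, heC, he1⟩ := List.mem_map.1 (hvisit i)
    have he2 : e.2 = w := hvout e (hCA e heC) i he1
    have : e = (v i, w) := Prod.ext he1 he2
    rwa [← this]
  -- define the injection
  have hex : ∀ i, ∃ k : Fin n, C.get k = (v i, w) := fun i => List.mem_iff_get.1 (hmemvi i)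
  let idx : Fin p → Fin n := fun i => (hex i).choose
  have hidx : ∀ i, C.get (idx i) = (v i, w) := fun i => (hex i).choose_spec
  let f : Fin p → Fin n := fun i => ⟨((idx i).1 + 1) % n, Nat.mod_lt _ npos⟩
  have hf : ∀ i, C.get (f i) = (w, uOut) := fun i => succ_lem (idx i) (by rw [hidx i])
  have hfinj : Function.Injective f := by
    intro i j hij
    have h1 : ((idx i).1 + 1) % n = ((idx j).1 + 1) % n := congrArg Fin.val hij
    have h2 : (idx i).1 % n = (idx j).1 % n :=
      (Nat.ModEq.add_right_cancel' 1 h1)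
    have h3 : idx i = idx j := Fin.ext (by
      rwa [Nat.mod_eq_of_lt (idx i).2, Nat.mod_eq_of_lt (idx j).2] at h2)
    have := hidx i
    rw [h3, hidx j] at this
    exact hinj (congrArg Prod.fst this.symm) |>.symm ▸ (hinj (by
      simpa using congrArg Prod.fst this))
  -- lower bound
  have hlow : p ≤ C.count (w, uOut) := by
    rw [count_eq_card_filter_get]
    calc p = Fintype.card (Fin p) := (Fintype.card_fin p).symm
      _ = (Finset.univ.image f).card := (Finset.card_image_of_injective _ hfinj).symm
      _ ≤ _ := Finset.card_le_card (by
          intro k hk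
          obtain ⟨i, _, rfl⟩ := Finset.mem_image.1 hk
          exact Finset.mem_filter.2 ⟨Finset.mem_univ _, hf i⟩)
  have hup : C.count (w, uOut) ≤ p := hcapwu ▸ hcaps (w, uOut)
  omega
end
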